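/- arXiv:1607.08863 — 2 statements merged into one kernel-verified Lean document; each statement's English description precedes it below -/
import Mathlib

section
/- Let x* = (s*_1,…,s*_N) be a strict Nash equilibrium of a finite N-player game, let a > 0 and M > 0 be such that v_{i s*_i}(x) − v_{i s_i}(x) ≥ a for all x ∈ U_M, all s_i ≠ s*_i and all i. Suppose the HEDGE algorithm with perfect mixed payoff observations (v̂_i(t) = v_i(x(t))) and step-sizes γ_t > 0 is initialized at a point x(1) ∈ U_M. Then for all t ≥ 1, ‖x(t+1) − x*‖ ≤ C·e^{−a·Σ_{j=1}^t γ_j}, where C = 2 e^{−M} Σ_i (|S_i| − 1). In particular, if Σ_{t=1}^∞ γ_t = ∞, then x(t) converges to x*. -/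
open Real Finset Filter Topology

noncomputable section

/-- Payoff to player `i` of pure strategy `b` against the mixed profile `x` of the
other players. -/
def purePay {N : ℕ} (S : Fin N → Type*) [∀ i, Fintype (S i)] [∀ i, DecidableEq (S i)]
    (u : ∀ _ : Fin N, (∀ j, S j) → ℝ) (i : Fin N) (b : S i) (x : ∀ j, S j → ℝ) : ℝ :=
  ∑ s : ∀ j, S j, if s i = b then u i s * ∏ j ∈ univ.erase i, x j (s j) else 0

/-- The logit (exponential weights) map. -/
def logit {α : Type*} [Fintype α] (y : α → ℝ) : α → ℝ :=
  fun a => Real.exp (y a) / ∑ b, Real.exp (y b)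

/-- `U_M = { x = Λ(y) : y_{i s_i} − y_{i s*_i} ≤ −M for all s_i ≠ s*_i, all i }`. -/
def inUM {N : ℕ} (S : Fin N → Type*) [∀ i, Fintype (S i)]
    (sstar : ∀ i, S i) (M : ℝ) (x : ∀ i, S i → ℝ) : Prop :=
  ∃ y : ∀ i, S i → ℝ, (∀ i, x i = logit (y i)) ∧
    ∀ i, ∀ b : S i, b ≠ sstar i → y i b - y i (sstar i) ≤ -M

/-!
Along HEDGE the score gaps `y_{i b} − y_{i s*_i}` start below `−M` and, as long as the play
stays in `U_M`, each step lowers them by at least `γ_t a`; so by induction the play never leaves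
`U_M` and after `t` steps every gap is at most `−M − a Σ_{j ≤ t} γ_j`. A logit distribution whose
gaps are at most `−c` puts mass at most `e^{−c}` on each suboptimal strategy, hence lies within
L¹-distance `2 (|S_i| − 1) e^{−c}` of the pure strategy `s*_i`.
-/

section Logit

variable {α : Type*} [Fintype α]

lemma logit_pos [Nonempty α] (y : α → ℝ) (b : α) : 0 < logit y b :=
  div_pos (exp_pos _) (sum_pos (fun _ _ => exp_pos _) univ_nonempty)

lemma sum_logit [Nonempty α] (y : α → ℝ) : ∑ b, logit y b = 1 := by
  unfold logit
  rw [← sum_div, div_self (sum_pos (fun c _ => exp_pos _) univ_nonempty).ne']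

lemma logit_le_exp_sub (y : α → ℝ) (b s : α) : logit y b ≤ exp (y b - y s) := by
  have hs : exp (y s) ≤ ∑ c, exp (y c) :=
    single_le_sum (fun c _ => (exp_pos _).le) (mem_univ s)
  unfold logit
  rw [exp_sub]
  exact div_le_div_of_nonneg_left (exp_pos _).le (exp_pos _) hs

lemma exp_sub_eq_logit_div_logit (y : α → ℝ) (b s : α) :
    exp (y b - y s) = logit y b / logit y s := by
  unfold logit
  rw [div_div_div_cancel_right₀ (sum_pos (fun c _ => exp_pos _) ⟨s, mem_univ s⟩).ne', exp_sub]

lemma sub_eq_sub_of_logit_eq {y y' : α → ℝ} (h : logit y = logit y') (b s : α) :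
    y b - y s = y' b - y' s :=
  exp_injective (by rw [exp_sub_eq_logit_div_logit, exp_sub_eq_logit_div_logit, h])

lemma sum_abs_logit_sub_ite_le [DecidableEq α] (y : α → ℝ) (s : α) (c : ℝ)
    (hgap : ∀ b, b ≠ s → y b - y s ≤ -c) :
    ∑ b, |logit y b - if b = s then 1 else 0| ≤ 2 * ((Fintype.card α : ℝ) - 1) * exp (-c) := by
  have : Nonempty α := ⟨s⟩
  set rest := ∑ b ∈ univ.erase s, logit y b
  have hrest : rest = 1 - logit y s := by
    rw [← sum_logit y, ← sum_erase_add _ _ (mem_univ s)]; ring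
  have hsplit : ∑ b, |logit y b - if b = s then 1 else 0| = rest + |logit y s - 1| := by
    rw [← sum_erase_add _ _ (mem_univ s), if_pos rfl]
    congr 1
    refine sum_congr rfl fun b hb => ?_
    rw [if_neg (ne_of_mem_erase hb), sub_zero, abs_of_pos (logit_pos y b)]
  have hrest_nonneg : 0 ≤ rest := sum_nonneg fun b _ => (logit_pos y b).le
  have hrest_le : rest ≤ ((Fintype.card α : ℝ) - 1) * exp (-c) :=
    calc rest ≤ ∑ _b ∈ univ.erase s, exp (-c) :=
          sum_le_sum fun b hb => (logit_le_exp_sub y b s).trans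
            (exp_le_exp.mpr (hgap b (ne_of_mem_erase hb)))
      _ = ((Fintype.card α : ℝ) - 1) * exp (-c) := by
          rw [sum_const, nsmul_eq_mul, card_erase_of_mem (mem_univ s), card_univ,
            Nat.cast_sub Fintype.card_pos, Nat.cast_one]
  rw [hsplit, abs_of_nonpos (by linarith)]
  linarith

end Logit

lemma sum_sum_abs_logit_sub_ite_le {ι : Type*} [Fintype ι] {S : ι → Type*}
    [∀ i, Fintype (S i)] [∀ i, DecidableEq (S i)] (y : ∀ i, S i → ℝ) (s : ∀ i, S i) (c : ℝ)
    (hgap : ∀ i, ∀ b, b ≠ s i → y i b - y i (s i) ≤ -c) :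
    ∑ i, ∑ b, |logit (y i) b - if b = s i then 1 else 0| ≤
      2 * exp (-c) * ∑ i, ((Fintype.card (S i) : ℝ) - 1) :=
  calc ∑ i, ∑ b, |logit (y i) b - if b = s i then 1 else 0|
      ≤ ∑ i, 2 * ((Fintype.card (S i) : ℝ) - 1) * exp (-c) :=
        sum_le_sum fun i _ => sum_abs_logit_sub_ite_le (y i) (s i) c (hgap i)
    _ = 2 * exp (-c) * ∑ i, ((Fintype.card (S i) : ℝ) - 1) := by
        rw [mul_sum]; exact sum_congr rfl fun i _ => by ring

lemma tendsto_nhds_of_sum_sum_abs_sub_le {β ι : Type*} [Fintype ι] {S : ι → Type*}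
    [∀ i, Fintype (S i)] {l : Filter β} {f : β → ∀ i, S i → ℝ} {p : ∀ i, S i → ℝ}
    {ε : β → ℝ} (hε : Tendsto ε l (𝓝 0))
    (hf : ∀ᶠ t in l, ∑ i, ∑ b, |f t i b - p i b| ≤ ε t) : Tendsto f l (𝓝 p) := by
  refine tendsto_pi_nhds.mpr fun i => tendsto_pi_nhds.mpr fun b => ?_
  refine tendsto_iff_dist_tendsto_zero.mpr
    (squeeze_zero' (Eventually.of_forall fun _ => dist_nonneg) ?_ hε)
  filter_upwards [hf] with t ht
  calc dist (f t i b) (p i b) = |f t i b - p i b| := Real.dist_eq _ _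
    _ ≤ ∑ b', |f t i b' - p i b'| :=
        single_le_sum (f := fun b' => |f t i b' - p i b'|) (fun _ _ => abs_nonneg _)
          (mem_univ b)
    _ ≤ ∑ i', ∑ b', |f t i' b' - p i' b'| :=
        single_le_sum (f := fun i' => ∑ b', |f t i' b' - p i' b'|)
          (fun _ _ => sum_nonneg fun _ _ => abs_nonneg _) (mem_univ i)
    _ ≤ ε t := ht

section Hedge

variable {N : ℕ} {S : Fin N → Type*} [∀ i, Fintype (S i)] {sstar : ∀ i, S i} {M : ℝ}

lemma sub_le_of_inUM {x y : ∀ i, S i → ℝ} (hx : ∀ i, x i = logit (y i))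
    (hU : inUM S sstar M x) (i : Fin N) (b : S i) (hb : b ≠ sstar i) :
    y i b - y i (sstar i) ≤ -M := by
  obtain ⟨y', hy', hgap⟩ := hU
  rw [sub_eq_sub_of_logit_eq ((hx i).symm.trans (hy' i)) b (sstar i)]
  exact hgap i b hb

theorem hedge_score_gap_le {a : ℝ} (ha : 0 ≤ a) (v : (∀ i, S i → ℝ) → ∀ i, S i → ℝ)
    (hgap : ∀ x, inUM S sstar M x → ∀ i, ∀ b : S i, b ≠ sstar i → v x i (sstar i) - v x i b ≥ a)
    {γ : ℕ → ℝ} (hγ : ∀ t, 1 ≤ t → 0 ≤ γ t) {y x : ℕ → ∀ i, S i → ℝ}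
    (hx : ∀ t, 1 ≤ t → ∀ i, x t i = logit (y t i))
    (hrec : ∀ t, 1 ≤ t → ∀ i, ∀ b : S i, y (t + 1) i b = y t i b + γ t * v (x t) i b)
    (hinit : inUM S sstar M (x 1)) :
    ∀ t, 1 ≤ t → ∀ i, ∀ b : S i, b ≠ sstar i →
      y t i b - y t i (sstar i) ≤ -M - a * ∑ j ∈ Ico 1 t, γ j := by
  intro t ht
  induction t, ht using Nat.le_induction with
  | base =>
    intro i b hb
    simpa using sub_le_of_inUM (hx 1 le_rfl) hinit i b hb
  | succ t ht ih =>
    have hΓ : 0 ≤ a * ∑ j ∈ Ico 1 t, γ j :=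
      mul_nonneg ha (sum_nonneg fun j hj => hγ j (mem_Ico.mp hj).1)
    have hU : inUM S sstar M (x t) :=
      ⟨y t, hx t ht, fun i b hb => by linarith [ih i b hb]⟩
    intro i b hb
    have hstep : γ t * a ≤ γ t * (v (x t) i (sstar i) - v (x t) i b) :=
      mul_le_mul_of_nonneg_left (hgap (x t) hU i b hb) (hγ t ht)
    rw [hrec t ht i b, hrec t ht i (sstar i), sum_Ico_succ_top ht]
    linarith [ih i b hb]

end Hedge

theorem hedge_perfect_info_exponential_convergence_general
    {N : ℕ} (S : Fin N → Type*) [∀ i, Fintype (S i)] [∀ i, DecidableEq (S i)]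
    (u : ∀ _ : Fin N, (∀ j, S j) → ℝ)
    (sstar : ∀ i, S i)
    (a M : ℝ) (ha : 0 < a)
    (hgap : ∀ x : ∀ i, S i → ℝ, inUM S sstar M x →
      ∀ i, ∀ b : S i, b ≠ sstar i →
        purePay S u i (sstar i) x - purePay S u i b x ≥ a)
    (γ : ℕ → ℝ) (hγ : ∀ t, 1 ≤ t → 0 < γ t)
    (y : ℕ → ∀ i, S i → ℝ) (x : ℕ → ∀ i, S i → ℝ)
    (hx : ∀ t, 1 ≤ t → ∀ i, x t i = logit (y t i))
    (hrec : ∀ t, 1 ≤ t → ∀ i, ∀ b : S i,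
      y (t + 1) i b = y t i b + γ t * purePay S u i b (x t))
    (hinit : inUM S sstar M (x 1)) :
    (∀ t, 1 ≤ t →
      ∑ i, ∑ b, |x (t + 1) i b - (if b = sstar i then 1 else 0)| ≤
        (2 * Real.exp (-M) * ∑ i, ((Fintype.card (S i) : ℝ) - 1)) *
          Real.exp (-a * ∑ j ∈ Finset.Icc 1 t, γ j)) ∧
    (Tendsto (fun T => ∑ j ∈ Finset.Icc 1 T, γ j) atTop atTop →
      Tendsto x atTop (𝓝 (fun i b => if b = sstar i then (1 : ℝ) else 0))) := by
  have hscores := hedge_score_gap_le ha.le (fun x i b => purePay S u i b x) hgap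
    (fun t ht => (hγ t ht).le) hx hrec hinit
  have hdist : ∀ t, 1 ≤ t →
      ∑ i, ∑ b, |x (t + 1) i b - (if b = sstar i then 1 else 0)| ≤
        (2 * exp (-M) * ∑ i, ((Fintype.card (S i) : ℝ) - 1)) *
          exp (-a * ∑ j ∈ Icc 1 t, γ j) := by
    intro t ht
    rw [funext (hx (t + 1) (by omega)), ← Ico_add_one_right_eq_Icc]
    calc _ ≤ 2 * exp (-(M + a * ∑ j ∈ Ico 1 (t + 1), γ j)) *
          ∑ i, ((Fintype.card (S i) : ℝ) - 1) :=
          sum_sum_abs_logit_sub_ite_le _ _ _ fun i b hb => by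
            linarith [hscores (t + 1) (by omega) i b hb]
      _ = _ := by rw [neg_add, exp_add, neg_mul]; ring
  refine ⟨hdist, fun hdiv => ?_⟩
  have hε : Tendsto (fun t => (2 * exp (-M) * ∑ i, ((Fintype.card (S i) : ℝ) - 1)) *
      exp (-a * ∑ j ∈ Icc 1 t, γ j)) atTop (𝓝 0) := by
    simpa [neg_mul] using ((tendsto_exp_atBot.comp
      (tendsto_neg_atTop_atBot.comp (hdiv.const_mul_atTop ha))).const_mul
        (2 * exp (-M) * ∑ i, ((Fintype.card (S i) : ℝ) - 1)))
  exact (tendsto_add_atTop_iff_nat 1).mp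
    (tendsto_nhds_of_sum_sum_abs_sub_le hε ((eventually_ge_atTop 1).mono hdist))

/-- Deterministic HEDGE started in `U_M` near a strict equilibrium converges to it at the
rate `‖x(t+1) − x*‖ ≤ C e^{−a Σ_{j=1}^t γ_j}` with `C = 2 e^{−M} Σ_i (|S_i| − 1)`;
in particular, if `Σ_t γ_t = ∞`, then `x(t) → x*`. -/
theorem hedge_perfect_info_exponential_convergence
    {N : ℕ} (S : Fin N → Type*) [∀ i, Fintype (S i)] [∀ i, DecidableEq (S i)]
    (u : ∀ _ : Fin N, (∀ j, S j) → ℝ)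
    (sstar : ∀ i, S i)
    (hstrict : ∀ i, ∀ b : S i, b ≠ sstar i →
      u i (Function.update sstar i b) < u i sstar)
    (a M : ℝ) (ha : 0 < a) (hM : 0 < M)
    (hgap : ∀ x : ∀ i, S i → ℝ, inUM S sstar M x →
      ∀ i, ∀ b : S i, b ≠ sstar i →
        purePay S u i (sstar i) x - purePay S u i b x ≥ a)
    (γ : ℕ → ℝ) (hγ : ∀ t, 1 ≤ t → 0 < γ t)
    (y : ℕ → ∀ i, S i → ℝ) (x : ℕ → ∀ i, S i → ℝ)
    (hx : ∀ t, 1 ≤ t → ∀ i, x t i = logit (y t i))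
    (hrec : ∀ t, 1 ≤ t → ∀ i, ∀ b : S i,
      y (t + 1) i b = y t i b + γ t * purePay S u i b (x t))
    (hinit : inUM S sstar M (x 1)) :
    (∀ t, 1 ≤ t →
      ∑ i, ∑ b, |x (t + 1) i b - (if b = sstar i then 1 else 0)| ≤
        (2 * Real.exp (-M) * ∑ i, ((Fintype.card (S i) : ℝ) - 1)) *
          Real.exp (-a * ∑ j ∈ Finset.Icc 1 t, γ j)) ∧
    (Tendsto (fun T => ∑ j ∈ Finset.Icc 1 T, γ j) atTop atTop →
      Tendsto x atTop (𝓝 (fun i b => if b = sstar i then (1 : ℝ) else 0))) :=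
  hedge_perfect_info_exponential_convergence_general S u sstar a M ha hgap γ hγ y x hx hrec hinit
end
end

section
/- Let x* = (s*_i)_i be a pure profile of a finite N-player game and suppose a > 0 and M > 0 are such that v_{i s*_i}(x) − v_{i s_i}(x) ≥ a for all x ∈ U_M, all s_i ≠ s*_i and all i. Then the set U_M is forward-invariant under one step of the HEDGE algorithm with perfect mixed payoff observations and any step-size γ_t > 0: if x(t) = Λ(y(t)) ∈ U_M and y(t+1) = y(t) + γ_t v(x(t)), then for every i and every s_i ≠ s*_i the score differences z_{i s_i} = y_{i s_i} − y_{i s*_i} satisfy z_{i s_i}(t+1) ≤ z_{i s_i}(t) − a γ_t ≤ −M − a γ_t; in particular x(t+1) = Λ(y(t+1)) ∈ U_M. -/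
/-! Since `x = Λ(y) ∈ U_M`, the payoff gap gives `v_{s_i}(x) - v_{s*_i}(x) ≤ -a`, so a HEDGE step
moves every score difference down by at least `aγ`; the new scores then witness `Λ(y') ∈ U_M`. -/

open Real Finset Filter Topology

noncomputable section

theorem sub_le_sub_sub_mul_of_step {α : Type*} (y v : α → ℝ) {a γ : ℝ} (hγ : 0 ≤ γ) {b c : α}
    (hgap : a ≤ v c - v b) :
    (y b + γ * v b) - (y c + γ * v c) ≤ (y b - y c) - a * γ := by
  linarith [mul_le_mul_of_nonneg_left hgap hγ]

theorem inUM_logit {N : ℕ} (S : Fin N → Type*) [∀ i, Fintype (S i)] (sstar : ∀ i, S i)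
    {M : ℝ} {y : ∀ i, S i → ℝ} (hz : ∀ i, ∀ b : S i, b ≠ sstar i → y i b - y i (sstar i) ≤ -M) :
    inUM S sstar M (fun i => logit (y i)) :=
  ⟨y, fun _ => rfl, hz⟩

theorem hedge_one_step_invariance_general
    {N : ℕ} (S : Fin N → Type*) [∀ i, Fintype (S i)] [∀ i, DecidableEq (S i)]
    (u : ∀ _ : Fin N, (∀ j, S j) → ℝ)
    (sstar : ∀ i, S i)
    (a M γ : ℝ) (ha : 0 < a) (hγ : 0 < γ)
    (hgap : ∀ x : ∀ i, S i → ℝ, inUM S sstar M x →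
      ∀ i, ∀ b : S i, b ≠ sstar i →
        purePay S u i (sstar i) x - purePay S u i b x ≥ a)
    (y x y' : ∀ i, S i → ℝ)
    (hxy : ∀ i, x i = logit (y i))
    (hz : ∀ i, ∀ b : S i, b ≠ sstar i → y i b - y i (sstar i) ≤ -M)
    (hy' : ∀ i, ∀ b : S i, y' i b = y i b + γ * purePay S u i b x) :
    (∀ i, ∀ b : S i, b ≠ sstar i →
      y' i b - y' i (sstar i) ≤ (y i b - y i (sstar i)) - a * γ ∧
      y' i b - y' i (sstar i) ≤ -M - a * γ) ∧
    inUM S sstar M (fun i => logit (y' i)) := by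
  have hxU : inUM S sstar M x := ⟨y, hxy, hz⟩
  have hdrift : ∀ i, ∀ b : S i, b ≠ sstar i →
      y' i b - y' i (sstar i) ≤ (y i b - y i (sstar i)) - a * γ := fun i b hb => by
    rw [hy', hy']
    exact sub_le_sub_sub_mul_of_step (y i) (purePay S u i · x) hγ.le (hgap x hxU i b hb)
  have hbound : ∀ i, ∀ b : S i, b ≠ sstar i → y' i b - y' i (sstar i) ≤ -M - a * γ :=
    fun i b hb => (hdrift i b hb).trans (by linarith [hz i b hb])
  refine ⟨fun i b hb => ⟨hdrift i b hb, hbound i b hb⟩, inUM_logit S sstar fun i b hb => ?_⟩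
  linarith [hbound i b hb, mul_pos ha hγ]

/-- One step of HEDGE with perfect mixed payoff observations leaves `U_M` invariant:
if `x = Λ(y) ∈ U_M` and `y' = y + γ v(x)`, then the score differences
`z_{i s_i} = y_{i s_i} − y_{i s*_i}` satisfy
`z'_{i s_i} ≤ z_{i s_i} − aγ ≤ −M − aγ`, so `Λ(y') ∈ U_M`. -/
theorem hedge_one_step_invariance
    {N : ℕ} (S : Fin N → Type*) [∀ i, Fintype (S i)] [∀ i, DecidableEq (S i)]
    (u : ∀ _ : Fin N, (∀ j, S j) → ℝ)
    (sstar : ∀ i, S i)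
    (a M γ : ℝ) (ha : 0 < a) (hM : 0 < M) (hγ : 0 < γ)
    (hgap : ∀ x : ∀ i, S i → ℝ, inUM S sstar M x →
      ∀ i, ∀ b : S i, b ≠ sstar i →
        purePay S u i (sstar i) x - purePay S u i b x ≥ a)
    (y x y' : ∀ i, S i → ℝ)
    (hxy : ∀ i, x i = logit (y i))
    (hz : ∀ i, ∀ b : S i, b ≠ sstar i → y i b - y i (sstar i) ≤ -M)
    (hy' : ∀ i, ∀ b : S i, y' i b = y i b + γ * purePay S u i b x) :
    (∀ i, ∀ b : S i, b ≠ sstar i →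
      y' i b - y' i (sstar i) ≤ (y i b - y i (sstar i)) - a * γ ∧
      y' i b - y' i (sstar i) ≤ -M - a * γ) ∧
    inUM S sstar M (fun i => logit (y' i)) :=
  hedge_one_step_invariance_general S u sstar a M γ ha hγ hgap y x y' hxy hz hy'
end
end
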